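/- arXiv:2412.03769 — 8 statements merged into one kernel-verified Lean document; each statement's English description precedes it below -/
import Mathlib

section
/- Let I be a monomial ideal with linear quotients in a skew polynomial ring, with decomposition function g. If u is a monomial in I such that u = v * w with v a minimal generator of I and w a monomial satisfying set(v) ∩ supp(w) = ∅, then v = g(u). -/
open Finset

/-- `IsDecomp u a j` : the `j`-th generator is the value of the decomposition function at the
monomial `x^a`, i.e. `u j` `*`-divides `a` and `j` is minimal with this property
(so `g(x^a) = x^(u j)`). -/
def IsDecomp {n m : ℕ} (u : Fin m → (Fin n → ℕ)) (a : Fin n → ℕ) (j : Fin m) : Prop :=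
  (∃ c, a = u j + c) ∧ ∀ i : Fin m, i < j → ¬ ∃ c, a = u i + c

/-- A monomial ideal with linear quotients: minimal monomial generators `x^(u 0), …, x^(u (m-1))`
(recorded by their exponent vectors) such that each colon ideal
`((u_0,…,u_{j-1}) : u_j)` is generated by the variables `x_s`, `s ∈ setu j`.
The membership of a monomial `x^w` in the colon ideal is recorded combinatorially. -/
structure LinearQuotients (n m : ℕ) where
  u : Fin m → (Fin n → ℕ)
  setu : Fin m → Finset (Fin n)
  colon : ∀ (j : Fin m) (w : Fin n → ℕ),
    (∃ i : Fin m, i < j ∧ ∃ c, w + u j = u i + c) ↔ ∃ s ∈ setu j, 1 ≤ w s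

/-- if `x^a = v * x^w` with `v = x^(u j')` a minimal generator and
`set(v) ∩ supp(x^w) = ∅`, then `v = g(x^a)`. -/
theorem decomp_unique {n m : ℕ} (L : LinearQuotients n m)
    (a w : Fin n → ℕ) (j' : Fin m)
    (hfac : a = L.u j' + w) (hdisj : ∀ s ∈ L.setu j', w s = 0) :
    ∀ j : Fin m, IsDecomp L.u a j → L.u j = L.u j' := by
  intro j ⟨⟨c, hc⟩, hmin⟩
  have hle : j ≤ j' := by
    by_contra h
    exact hmin j' (lt_of_not_ge h) ⟨w, hfac⟩
  rcases eq_or_lt_of_le hle with heq | hlt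
  · rw [heq]
  · exfalso
    have : ∃ i : Fin m, i < j' ∧ ∃ c, w + L.u j' = L.u i + c :=
      ⟨j, hlt, c, by rw [add_comm, ← hfac, hc]⟩
    obtain ⟨s, hs, hws⟩ := (L.colon j' w).mp this
    simp [hdisj s hs] at hws
end

section
/- Let I be a monomial ideal with linear quotients in a skew polynomial ring, with decomposition function g. For monomials u, v ∈ M(I), one has g(u * v) = g(u) if and only if set(g(u)) ∩ supp(v) = ∅. -/
/-!
Exponent vectors are ordered by divisibility. The colon condition says that an earlier generator
divides `x^w · u_j` iff `x^w` involves a variable of `set(u_j)`; hence `g(u_j · x^w) = u_j` iff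
`supp(x^w) ∩ set(u_j) = ∅`. If `g(u) = u_j` with `u = u_j · x^w`, then `u · v = u_j · (x^w · v)`,
and `supp(x^w · v)` meets `set(u_j)` iff `supp(v)` does. Finally, if `g(u · v)` and `g(u)` are
the same generator then they have the same index, by minimality of both indices.
-/

open Finset

theorem isDecomp_iff {n m : ℕ} {u : Fin m → Fin n → ℕ} {a : Fin n → ℕ} {j : Fin m} :
    IsDecomp u a j ↔ u j ≤ a ∧ ∀ i < j, ¬ u i ≤ a := by
  simp only [IsDecomp, le_iff_exists_add]

theorem IsDecomp.le_of_le {n m : ℕ} {u : Fin m → Fin n → ℕ} {a : Fin n → ℕ} {i j : Fin m}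
    (h : IsDecomp u a j) (hi : u i ≤ a) : j ≤ i :=
  not_lt.1 fun hij => (isDecomp_iff.1 h).2 i hij hi

namespace LinearQuotients

variable {n m : ℕ} (L : LinearQuotients n m)

theorem exists_lt_le_add_iff (j : Fin m) (w : Fin n → ℕ) :
    (∃ i < j, L.u i ≤ w + L.u j) ↔ ∃ s ∈ L.setu j, w s ≠ 0 := by
  have hcolon := L.colon j w
  simp only [Nat.one_le_iff_ne_zero] at hcolon
  simpa only [le_iff_exists_add] using hcolon

theorem isDecomp_self_add_iff (j : Fin m) (w : Fin n → ℕ) :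
    IsDecomp L.u (L.u j + w) j ↔ ∀ s ∈ L.setu j, w s = 0 := by
  rw [isDecomp_iff, and_iff_right le_self_add, add_comm]
  simpa only [not_exists, not_and, not_not] using (L.exists_lt_le_add_iff j w).not

theorem isDecomp_add_iff {a : Fin n → ℕ} {j : Fin m} (hj : IsDecomp L.u a j) (b : Fin n → ℕ) :
    IsDecomp L.u (a + b) j ↔ ∀ s ∈ L.setu j, b s = 0 := by
  obtain ⟨w, rfl⟩ := hj.1
  have hw := (L.isDecomp_self_add_iff j w).1 hj
  simp only [add_assoc, isDecomp_self_add_iff, Pi.add_apply, Nat.add_eq_zero_iff]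
  exact forall₂_congr fun s hs => and_iff_right (hw s hs)

end LinearQuotients

theorem decomp_mul_eq_iff_general {n m : ℕ} (L : LinearQuotients n m)
    (a b : Fin n → ℕ)
    (j : Fin m) (hj : IsDecomp L.u a j) :
    (∃ j' : Fin m, IsDecomp L.u (a + b) j' ∧ L.u j' = L.u j) ↔ ∀ s ∈ L.setu j, b s = 0 := by
  rw [← L.isDecomp_add_iff hj]
  refine ⟨fun ⟨j', hj', hu⟩ => ?_, fun h => ⟨j, h, rfl⟩⟩
  have ha : L.u j ≤ a := (isDecomp_iff.1 hj).1
  obtain rfl : j' = j :=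
    le_antisymm (hj'.le_of_le (ha.trans le_self_add)) (hj.le_of_le (hu ▸ ha))
  exact hj'

/-- for monomials `x^a, x^b ∈ M(I)`, one has `g(x^a * x^b) = g(x^a)` if and only if
`set(g(x^a)) ∩ supp(x^b) = ∅`. -/
theorem decomp_mul_eq_iff {n m : ℕ} (L : LinearQuotients n m)
    (a b : Fin n → ℕ)
    (ha : ∃ (i : Fin m) (c : Fin n → ℕ), a = L.u i + c)
    (hb : ∃ (i : Fin m) (c : Fin n → ℕ), b = L.u i + c)
    (j : Fin m) (hj : IsDecomp L.u a j) :
    (∃ j' : Fin m, IsDecomp L.u (a + b) j' ∧ L.u j' = L.u j) ↔ ∀ s ∈ L.setu j, b s = 0 :=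
  decomp_mul_eq_iff_general L a b j hj
end

section
/- Let I be a monomial ideal with linear quotients and regular decomposition function g in a skew polynomial ring. Then for all u ∈ M(I) and all s, t ∈ set(u), one has g(x_s * g(x_t * u)) = g(x_s * x_t * u) = g(x_t * g(x_s * u)). -/
open Finset

/-- The decomposition function is regular: `set(g(x_s * u)) ⊆ set(u)` for all `s ∈ set(u)`
and all minimal generators `u`. -/
def LinearQuotients.Regular {n m : ℕ} (L : LinearQuotients n m) : Prop :=
  ∀ (j : Fin m), ∀ s ∈ L.setu j, ∀ j' : Fin m,
    IsDecomp L.u (Pi.single s 1 + L.u j) j' → L.setu j' ⊆ L.setu j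

/-! The key case is `g(x_s g(x_t a)) = g(x_s x_t a)`: the first generator dividing `x_s x_t a`
cannot come before `g(x_s g(x_t a))`. Otherwise, writing `x_t a = g(x_t a) e`, the monomial `x_s e`
lies in the colon ideal of `g(x_t a)`, and since the cofactor `e` avoids its variables this forces
`s ∈ set(g(x_t a))`; regularity then puts the variables of the colon ideal of `g(x_s g(x_t a))`
among those of `g(x_t a)`, which neither cofactor can contain. The second equality is the first
with `s` and `t` swapped. -/

theorem IsDecomp.le_of_eq_add {n m : ℕ} {u : Fin m → (Fin n → ℕ)} {a : Fin n → ℕ} {j i : Fin m}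
    (h : IsDecomp u a j) {c : Fin n → ℕ} (hc : a = u i + c) : j ≤ i :=
  not_lt.mp fun hij => h.2 i hij ⟨c, hc⟩

namespace LinearQuotients

variable {n m : ℕ} (L : LinearQuotients n m)

theorem cofactor_eq_zero_of_isDecomp {a e : Fin n → ℕ} {j : Fin m} (h : IsDecomp L.u a j)
    (he : a = L.u j + e) {r : Fin n} (hr : r ∈ L.setu j) : e r = 0 := by
  by_contra hne
  obtain ⟨i, hij, c, hc⟩ := (L.colon j e).mpr ⟨r, hr, Nat.one_le_iff_ne_zero.mpr hne⟩
  exact h.2 i hij ⟨c, by rw [he, add_comm]; exact hc⟩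

variable {L}

theorem Regular.decomp_single_add_decomp (hreg : L.Regular) {a : Fin n → ℕ} {s t : Fin n}
    {jt j₁ j₂ : Fin m} (hjt : IsDecomp L.u (Pi.single t 1 + a) jt)
    (h₁ : IsDecomp L.u (Pi.single s 1 + L.u jt) j₁)
    (h₂ : IsDecomp L.u (Pi.single s 1 + (Pi.single t 1 + a)) j₂) : j₁ = j₂ := by
  obtain ⟨e, he⟩ := hjt.1
  obtain ⟨f, hf⟩ := h₁.1
  obtain ⟨c, hc⟩ := h₂.1
  have hdiv : Pi.single s 1 + (Pi.single t 1 + a) = L.u j₁ + (f + e) := by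
    rw [he, ← add_assoc, hf, add_assoc]
  refine le_antisymm ?_ (h₂.le_of_eq_add hdiv)
  by_contra! hlt
  have hj₁ : j₁ ≤ jt := h₁.le_of_eq_add (add_comm _ _)
  have hs : s ∈ L.setu jt := by
    obtain ⟨r, hr, hr1⟩ := (L.colon jt (Pi.single s 1 + e)).mp
      ⟨j₂, hlt.trans_le hj₁, c, by rw [add_assoc, add_comm e, ← he, hc]⟩
    have her := L.cofactor_eq_zero_of_isDecomp hjt he hr
    rw [Pi.add_apply, her, add_zero, Pi.single_apply] at hr1
    by_cases hrs : r = s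
    · exact hrs ▸ hr
    · simp [hrs] at hr1
  obtain ⟨p, hp, hp1⟩ := (L.colon j₁ (f + e)).mp ⟨j₂, hlt, c, by rw [add_comm, ← hdiv, hc]⟩
  have hfp := L.cofactor_eq_zero_of_isDecomp h₁ hf hp
  have hep := L.cofactor_eq_zero_of_isDecomp hjt he (hreg jt s hs j₁ h₁ hp)
  simp [hfp, hep] at hp1

end LinearQuotients

theorem regular_decomp_swap_general {n m : ℕ} (L : LinearQuotients n m) (hreg : L.Regular)
    (a : Fin n → ℕ) (s t : Fin n) (jt js j₁ j₂ j₃ : Fin m)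
    (hjt : IsDecomp L.u (Pi.single t 1 + a) jt)
    (hjs : IsDecomp L.u (Pi.single s 1 + a) js)
    (h₁ : IsDecomp L.u (Pi.single s 1 + L.u jt) j₁)
    (h₂ : IsDecomp L.u (Pi.single s 1 + (Pi.single t 1 + a)) j₂)
    (h₃ : IsDecomp L.u (Pi.single t 1 + L.u js) j₃) :
    L.u j₁ = L.u j₂ ∧ L.u j₂ = L.u j₃ := by
  have h₂' : IsDecomp L.u (Pi.single t 1 + (Pi.single s 1 + a)) j₂ := by
    rwa [add_left_comm]
  rw [hreg.decomp_single_add_decomp hjt h₁ h₂, hreg.decomp_single_add_decomp hjs h₃ h₂']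
  exact ⟨rfl, rfl⟩

/-- if the decomposition function is regular, then
`g(x_s * g(x_t * u)) = g(x_s * x_t * u) = g(x_t * g(x_s * u))` for all `u ∈ M(I)` and
`s, t ∈ set(g(u))`. -/
theorem regular_decomp_swap {n m : ℕ} (L : LinearQuotients n m) (hreg : L.Regular)
    (a : Fin n → ℕ) (j₀ : Fin m) (h₀ : IsDecomp L.u a j₀)
    (s t : Fin n) (hs : s ∈ L.setu j₀) (ht : t ∈ L.setu j₀)
    (jt js j₁ j₂ j₃ : Fin m)
    (hjt : IsDecomp L.u (Pi.single t 1 + a) jt)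
    (hjs : IsDecomp L.u (Pi.single s 1 + a) js)
    (h₁ : IsDecomp L.u (Pi.single s 1 + L.u jt) j₁)
    (h₂ : IsDecomp L.u (Pi.single s 1 + (Pi.single t 1 + a)) j₂)
    (h₃ : IsDecomp L.u (Pi.single t 1 + L.u js) j₃) :
    L.u j₁ = L.u j₂ ∧ L.u j₂ = L.u j₃ :=
  regular_decomp_swap_general L hreg a s t jt js j₁ j₂ j₃ hjt hjs h₁ h₂ h₃
end

section
/- For monomials m_1,...,m_s in a skew polynomial ring and any monomial u, the twisted skew Taylor complex T̃(m_1,...,m_s; u), with free modules R^(s choose i) on basis e(σ; u) for σ ⊆ [s], |σ| = i, and differential ∂(e(σ;u)) = Σ_{i∈σ} e(σ\{i}; u)·(-1)^{α(σ;i)}·C(m_{σ\{i}} * u, m_σ/m_{σ\{i}})^{-1}·(m_σ/m_{σ\{i}}), is isomorphic as a complex of R-modules to the untwisted skew Taylor complex T(m_1,...,m_s) = T̃(m_1,...,m_s; 1), via the chain isomorphism φ(e_σ) = C(u, m_σ)·e(σ; u). -/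
open Finset

/-- Bundled data of a skew polynomial ring `k_q[x_1,...,x_n]`: an algebra `R` over `k`
with quantum parameters `q`, skew-commuting variables `x i`, a linearly independent
family of sorted monomials `x^a = x_1^{a_1} ⋯ x_n^{a_n}`, and the bicharacter `C`
defined by the equation `x^a · x^b = C(a,b) • x^(a+b)`. -/
structure SkewPoly (k : Type) [Field k] (n : ℕ) (R : Type) [Ring R] [Algebra k R] : Type where
  q : Fin n → Fin n → kˣ
  q_symm : ∀ i j, q j i = (q i j)⁻¹
  q_diag : ∀ i, q i i = 1
  x : Fin n → R
  x_comm : ∀ i j, x i * x j = ((q i j : kˣ) : k) • (x j * x i)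
  C : (Fin n → ℕ) → (Fin n → ℕ) → kˣ
  C_spec : ∀ a b : Fin n → ℕ,
    (((List.finRange n).map fun i => x i ^ a i).prod) *
      (((List.finRange n).map fun i => x i ^ b i).prod) =
      ((C a b : kˣ) : k) • (((List.finRange n).map fun i => x i ^ (a i + b i)).prod)
  linInd : LinearIndependent k
    (fun a : Fin n → ℕ => (((List.finRange n).map fun i => x i ^ a i).prod))

/-- The sorted monomial `x^a = x_1^{a_1} ⋯ x_n^{a_n}`. -/
def SkewPoly.mono {k : Type} [Field k] {n : ℕ} {R : Type} [Ring R] [Algebra k R]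
    (S : SkewPoly k n R) (a : Fin n → ℕ) : R :=
  ((List.finRange n).map fun i => S.x i ^ a i).prod

/-- Exponent vector of the least common multiple `m_σ` of the monomials `m i`, `i ∈ σ`. -/
def lcmE {n s : ℕ} (m : Fin s → Fin n → ℕ) (σ : Finset (Fin s)) : Fin n → ℕ :=
  fun t => σ.sup fun i => m i t

/-- Total differential of the skew Taylor complex of `m_1,…,m_s` twisted by the monomial `x^u`,
acting on coordinates with respect to the basis `e(σ;u)`, `σ ⊆ [s]` (the untwisted complex is
the case `u = 0`):
`∂(e(σ;u)) = Σ_{i∈σ} e(σ\{i};u)·(-1)^{α(σ;i)}·C(m_{σ\{i}} * u, m_σ/m_{σ\{i}})⁻¹·(m_σ/m_{σ\{i}})`. -/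
noncomputable def taylorD {k : Type} [Field k] {n : ℕ} {R : Type} [Ring R] [Algebra k R]
    {s : ℕ} (S : SkewPoly k n R) (m : Fin s → Fin n → ℕ) (u : Fin n → ℕ)
    (f : Finset (Fin s) → R) : Finset (Fin s) → R :=
  fun τ => ∑ i ∈ τᶜ,
    (-1 : R) ^ ((τ.filter (· < i)).card) *
      algebraMap k R (((S.C (lcmE m τ + u) (lcmE m (insert i τ) - lcmE m τ))⁻¹ : kˣ) : k) *
      S.mono (lcmE m (insert i τ) - lcmE m τ) * f (insert i τ)

/-! The rescaling `e_σ ↦ C(u, m_σ)·e(σ;u)` is diagonal with unit entries, hence bijective.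
Comparing the coefficients of `e(τ;u)` in the two images of `e_{τ ∪ {i}}`, with
`m_{τ ∪ {i}} = m_τ · x^d`, the chain-map condition becomes
`C(u, m_τ) / C(m_τ, d) = C(u, m_τ + d) / C(m_τ + u, d)`, a rearrangement of the 2-cocycle
identity of `C`, which in turn is the associativity of the product of monomials. -/

variable {k : Type} [Field k] {n : ℕ} {R : Type} [Ring R] [Algebra k R]

namespace SkewPoly

lemma mono_mul (S : SkewPoly k n R) (a b : Fin n → ℕ) :
    S.mono a * S.mono b = ((S.C a b : kˣ) : k) • S.mono (a + b) :=
  S.C_spec a b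

lemma smul_mono_injective (S : SkewPoly k n R) (a : Fin n → ℕ) :
    Function.Injective fun c : k => c • S.mono a :=
  smul_left_injective k (S.linInd.ne_zero a)

lemma C_cocycle (S : SkewPoly k n R) (a b c : Fin n → ℕ) :
    S.C a b * S.C (a + b) c = S.C b c * S.C a (b + c) := by
  have hleft : (S.mono a * S.mono b) * S.mono c
      = ((S.C a b * S.C (a + b) c : kˣ) : k) • S.mono (a + b + c) := by
    rw [S.mono_mul a b, smul_mul_assoc, S.mono_mul (a + b) c, Units.val_mul, mul_smul]
  have hright : S.mono a * (S.mono b * S.mono c)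
      = ((S.C b c * S.C a (b + c) : kˣ) : k) • S.mono (a + b + c) := by
    rw [S.mono_mul b c, mul_smul_comm, S.mono_mul a (b + c), Units.val_mul, mul_smul, add_assoc]
  exact Units.ext <| S.smul_mono_injective _ <| hleft.symm.trans <| (mul_assoc _ _ _).trans hright

lemma C_twist (S : SkewPoly k n R) (u a d : Fin n → ℕ) :
    S.C u a / S.C a d = S.C u (a + d) / S.C (a + u) d := by
  rw [div_eq_div_iff_mul_eq_mul, add_comm a u, S.C_cocycle, mul_comm]

end SkewPoly

lemma lcmE_mono {s : ℕ} (m : Fin s → Fin n → ℕ) : Monotone (lcmE m) :=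
  fun _ _ hστ _ => Finset.sup_mono hστ

lemma smul_taylorD_zero_eq_taylorD {s : ℕ} (S : SkewPoly k n R) (m : Fin s → Fin n → ℕ) (u : Fin n → ℕ)
    (f : Finset (Fin s) → R) :
    (fun σ => ((S.C u (lcmE m σ) : kˣ) : k) • taylorD S m 0 f σ) =
      taylorD S m u (fun σ => ((S.C u (lcmE m σ) : kˣ) : k) • f σ) := by
  funext τ
  simp only [taylorD, Finset.smul_sum]
  refine Finset.sum_congr rfl fun i _ => ?_
  have hlcm := add_tsub_cancel_of_le (lcmE_mono m (subset_insert i τ))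
  set d := lcmE m (insert i τ) - lcmE m τ
  rw [← hlcm, add_zero]
  have hcoeff := congrArg Units.val (S.C_twist u (lcmE m τ) d)
  simp only [Units.val_div_eq_div_val] at hcoeff
  simp only [Algebra.algebraMap_eq_smul_one, smul_mul_assoc, mul_smul_comm, smul_smul,
    Units.val_inv_eq_inv_val, ← div_eq_mul_inv, hcoeff]

/-- the twisted skew Taylor complex `T̃(m_1,…,m_s; u)` is isomorphic to the
untwisted one `T(m_1,…,m_s) = T̃(m_1,…,m_s; 1)` via the chain isomorphism
`φ(e_σ) = C(u, m_σ)·e(σ;u)`. -/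
theorem twisted_taylor_iso {k : Type} [Field k] {n : ℕ} {R : Type} [Ring R] [Algebra k R]
    {s : ℕ} (S : SkewPoly k n R) (m : Fin s → Fin n → ℕ) (u : Fin n → ℕ) :
    Function.Bijective
      (fun (f : Finset (Fin s) → R) => fun σ => ((S.C u (lcmE m σ) : kˣ) : k) • f σ) ∧
    ∀ f : Finset (Fin s) → R,
      (fun σ => ((S.C u (lcmE m σ) : kˣ) : k) • taylorD S m 0 f σ) =
        taylorD S m u (fun σ => ((S.C u (lcmE m σ) : kˣ) : k) • f σ) :=
  ⟨MulAction.bijective (fun σ => S.C u (lcmE m σ)), smul_taylorD_zero_eq_taylorD S m u⟩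
end

section
/- In particular, the twisted skew Taylor complex T̃(m_1,...,m_s; u) is a complex: its differential satisfies ∂² = 0. -/
open Finset

section helpers
variable {k : Type} [Field k] {n : ℕ} {R : Type} [Ring R] [Algebra k R]

lemma SkewPoly.mono_mul_s8 (S : SkewPoly k n R) (a b : Fin n → ℕ) :
    S.mono a * S.mono b = ((S.C a b : kˣ) : k) • S.mono (a + b) := S.C_spec a b

lemma SkewPoly.mono_ne_zero (S : SkewPoly k n R) (a : Fin n → ℕ) : S.mono a ≠ 0 :=
  S.linInd.ne_zero a

lemma SkewPoly.smul_cancel (S : SkewPoly k n R) {α β : k} (a : Fin n → ℕ)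
    (h : α • S.mono a = β • S.mono a) : α = β := by
  by_contra hne
  have h2 : (α - β) • S.mono a = 0 := by rw [sub_smul, h, sub_self]
  have h3 : S.mono a = 0 := by
    have := congrArg (fun r => (α - β)⁻¹ • r) h2
    simpa [smul_smul, inv_mul_cancel₀ (sub_ne_zero.mpr hne)] using this
  exact S.mono_ne_zero a h3

lemma SkewPoly.cocycle (S : SkewPoly k n R) (a b c : Fin n → ℕ) :
    ((S.C a b : kˣ) : k) * ((S.C (a + b) c : kˣ) : k)
      = ((S.C b c : kˣ) : k) * ((S.C a (b + c) : kˣ) : k) := by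
  apply S.smul_cancel (a + b + c)
  have h1 : S.mono a * S.mono b * S.mono c
      = (((S.C a b : kˣ) : k) * ((S.C (a + b) c : kˣ) : k)) • S.mono (a + b + c) := by
    rw [S.mono_mul_s8, smul_mul_assoc, S.mono_mul_s8, smul_smul]
  have h2 : S.mono a * S.mono b * S.mono c
      = (((S.C b c : kˣ) : k) * ((S.C a (b + c) : kˣ) : k)) • S.mono (a + b + c) := by
    rw [mul_assoc, S.mono_mul_s8, mul_smul_comm, S.mono_mul_s8, smul_smul, ← add_assoc]
  rw [← h1, h2]

end helpers

section more
variable {k : Type} [Field k] {n : ℕ} {R : Type} [Ring R] [Algebra k R]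

lemma SkewPoly.key (S : SkewPoly k n R) {A B D : Fin n → ℕ} (u : Fin n → ℕ)
    (hAB : ∀ t, A t ≤ B t) (hBD : ∀ t, B t ≤ D t) :
    algebraMap k R (((S.C (A + u) (B - A))⁻¹ : kˣ) : k) * S.mono (B - A) *
      (algebraMap k R (((S.C (B + u) (D - B))⁻¹ : kˣ) : k) * S.mono (D - B)) =
    algebraMap k R (((S.C (A + u) (D - A))⁻¹ : kˣ) : k) * S.mono (D - A) := by
  have hBA : (B - A) + (D - B) = D - A := by
    funext t
    simp only [Pi.add_apply, Pi.sub_apply]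
    have := hAB t; have := hBD t; omega
  have hBu : (A + u) + (B - A) = B + u := by
    funext t
    simp only [Pi.add_apply, Pi.sub_apply]
    have := hAB t; omega
  have hco := S.cocycle (A + u) (B - A) (D - B)
  rw [hBu, hBA] at hco
  -- switch to smul form
  rw [← Algebra.smul_def, ← Algebra.smul_def, ← Algebra.smul_def,
    smul_mul_assoc, mul_smul_comm, smul_smul, S.mono_mul_s8, smul_smul, hBA]
  congr 1
  have h1 : ((S.C (A + u) (B - A) : kˣ) : k) ≠ 0 := Units.ne_zero _
  have h2 : ((S.C (B + u) (D - B) : kˣ) : k) ≠ 0 := Units.ne_zero _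
  have h3 : ((S.C (A + u) (D - A) : kˣ) : k) ≠ 0 := Units.ne_zero _
  simp only [Units.val_inv_eq_inv_val] at *
  field_simp
  linear_combination -hco

lemma sign_aux {s : ℕ} {τ : Finset (Fin s)} {i j : Fin s} (hij : i ≠ j) (hi : i ∉ τ)
    (hj : j ∉ τ) :
    Odd (((τ.filter (· < i)).card + ((insert i τ).filter (· < j)).card) +
      ((τ.filter (· < j)).card + ((insert j τ).filter (· < i)).card)) := by
  rw [Nat.odd_iff]
  rcases hij.lt_or_gt with h | h
  · have h1 : ((insert i τ).filter (· < j)).card = (τ.filter (· < j)).card + 1 := by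
      rw [Finset.filter_insert, if_pos h,
        Finset.card_insert_of_notMem (fun hm => hi (Finset.mem_filter.mp hm).1)]
    have h2 : ((insert j τ).filter (· < i)).card = (τ.filter (· < i)).card := by
      rw [Finset.filter_insert, if_neg (not_lt.mpr h.le)]
    rw [h1, h2]; omega
  · have h1 : ((insert j τ).filter (· < i)).card = (τ.filter (· < i)).card + 1 := by
      rw [Finset.filter_insert, if_pos h,
        Finset.card_insert_of_notMem (fun hm => hj (Finset.mem_filter.mp hm).1)]
    have h2 : ((insert i τ).filter (· < j)).card = (τ.filter (· < j)).card := by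
      rw [Finset.filter_insert, if_neg (not_lt.mpr h.le)]
    rw [h1, h2]; omega

lemma neg_one_pow_add_eq_zero {a b : ℕ} (h : Odd (a + b)) : ((-1 : R) ^ a + (-1 : R) ^ b) = 0 := by
  rw [Nat.odd_iff] at h
  rcases Nat.even_or_odd a with ha | ha
  · have hb : Odd b := by rw [Nat.odd_iff]; rw [Nat.even_iff] at ha; omega
    rw [ha.neg_one_pow, hb.neg_one_pow]; exact add_neg_cancel 1
  · have hb : Even b := by rw [Nat.even_iff]; rw [Nat.odd_iff] at ha; omega
    rw [ha.neg_one_pow, hb.neg_one_pow]; exact neg_add_cancel 1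

lemma reassoc_aux (a b : ℕ) (x1 x2 y1 y2 fv : R) :
    (((-1 : R) ^ a * x1) * x2) * ((((-1 : R) ^ b * y1) * y2) * fv) =
      ((-1 : R) ^ a * (-1 : R) ^ b) * (((x1 * x2) * (y1 * y2)) * fv) := by
  have h : ∀ w z : R, w * ((-1 : R) ^ b * z) = (-1 : R) ^ b * (w * z) := fun w z => by
    rw [← mul_assoc, ((Commute.neg_one_right w).pow_right b).eq, mul_assoc]
  simp only [mul_assoc, h]

end more

/-- the twisted skew Taylor complex is a complex: `∂² = 0`. -/
theorem twisted_taylor_complex {k : Type} [Field k] {n : ℕ} {R : Type} [Ring R] [Algebra k R]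
    {s : ℕ} (S : SkewPoly k n R) (m : Fin s → Fin n → ℕ) (u : Fin n → ℕ)
    (f : Finset (Fin s) → R) :
    taylorD S m u (taylorD S m u f) = 0 := by
  funext τ
  show (∑ i ∈ τᶜ, _) = (0 : R)
  simp only [taylorD, Finset.compl_insert, Finset.mul_sum]
  rw [Finset.sum_sigma']
  refine Finset.sum_involution (fun p _ => ⟨p.2, p.1⟩) ?_ ?_ ?_ ?_
  · rintro ⟨i, j⟩ hp
    simp only [Finset.mem_sigma, Finset.mem_compl, Finset.mem_erase, Finset.mem_compl] at hp
    obtain ⟨hi, hji, hj⟩ := hp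
    dsimp only
    rw [Finset.insert_comm i j τ]
    have hLLi : ∀ t, lcmE m τ t ≤ lcmE m (insert i τ) t :=
      fun t => Finset.sup_mono (Finset.subset_insert _ _)
    have hLLj : ∀ t, lcmE m τ t ≤ lcmE m (insert j τ) t :=
      fun t => Finset.sup_mono (Finset.subset_insert _ _)
    have hLiD : ∀ t, lcmE m (insert i τ) t ≤ lcmE m (insert j (insert i τ)) t :=
      fun t => Finset.sup_mono (Finset.subset_insert _ _)
    have hLjD : ∀ t, lcmE m (insert j τ) t ≤ lcmE m (insert j (insert i τ)) t := by
      intro t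
      refine Finset.sup_mono ?_
      rw [Finset.insert_comm]
      exact Finset.subset_insert _ _
    rw [reassoc_aux, reassoc_aux, S.key u hLLi hLiD, S.key u hLLj hLjD,
      ← pow_add, ← pow_add, ← add_mul,
      neg_one_pow_add_eq_zero (sign_aux (fun h => hji h.symm) hi hj), zero_mul]
  · rintro ⟨i, j⟩ hp _
    simp only [Finset.mem_sigma, Finset.mem_erase] at hp
    intro h
    exact hp.2.1 (congrArg Sigma.fst h) |>.elim
  · rintro ⟨i, j⟩ hp
    simp only [Finset.mem_sigma, Finset.mem_compl, Finset.mem_erase, Finset.mem_compl] at hp ⊢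
    exact ⟨hp.2.2, fun h => hp.2.1 h.symm, hp.1⟩
  · rintro ⟨i, j⟩ hp
    rfl
end

section
/- If monomials m_1,...,m_s in a skew polynomial ring have pairwise disjoint supports, then the skew Koszul complex K(m_1,...,m_s) and the skew Taylor complex T(m_1,...,m_s) are isomorphic as complexes of R-modules, via the chain isomorphism ψ(e_σ) = e_σ · Π_{r=2}^{j} C(m_{i_1}*···*m_{i_{r-1}}, m_{i_r})^{-1} for σ = {i_1 < ··· < i_j}. -/
open Finset

/-- The alternating bicharacter `χ` with `χ(σ_i,σ_j) = q_{ij}`. -/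
def SkewPoly.chi {k : Type} [Field k] {n : ℕ} {R : Type} [Ring R] [Algebra k R]
    (S : SkewPoly k n R) (a b : Fin n → ℕ) : kˣ :=
  ∏ i : Fin n, ∏ j : Fin n, S.q i j ^ (a i * b j)

/-- Total differential of the skew Koszul complex on the monomials `m_1,…,m_s`:
`∂^K(e_σ) = Σ_{r=1}^{j} (-1)^{r-1} e_{σ\{i_r}} · χ(m_{i_r}, m_{i_{r+1}}*⋯*m_{i_j}) · m_{i_r}`
for `σ = {i_1 < ⋯ < i_j}`. -/
noncomputable def koszulD {k : Type} [Field k] {n : ℕ} {R : Type} [Ring R] [Algebra k R]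
    {s : ℕ} (S : SkewPoly k n R) (m : Fin s → Fin n → ℕ)
    (f : Finset (Fin s) → R) : Finset (Fin s) → R :=
  fun τ => ∑ i ∈ τᶜ,
    (-1 : R) ^ ((τ.filter (· < i)).card) *
      algebraMap k R ((S.chi (m i) (∑ j ∈ τ.filter (fun j => i < j), m j) : kˣ) : k) *
      S.mono (m i) * f (insert i τ)

/-!
The scalar that `ψ` attaches to `e_σ` is `c(σ)⁻¹`, where
`x^{m_{i_1}} ⋯ x^{m_{i_j}} = c(σ) • x^{m_{i_1} + ⋯ + m_{i_j}}` (`SkewPoly.orderedC`).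
With disjoint supports `m_σ = Σ_{i ∈ σ} m_i`, so both differentials have the same shape
and only their scalars must be compared. Inserting `i` into `τ` amounts to moving `x^{m_i}`
past the factors `x^{m_j}` with `j ∈ τ`, `j > i`, which costs `χ(m_i, Σ_{j ∈ τ, j > i} m_j)`:
`c(τ ∪ {i}) = χ(m_i, Σ_{j ∈ τ, j > i} m_j) · c(τ) · C(m_τ, m_i)`,
and this is exactly the ratio of the Koszul and Taylor coefficients.
-/

section TwistedCommutation

variable {k R : Type} [CommSemiring k] [Semiring R] [Algebra k R]

theorem mul_pow_eq_smul_of_mul_eq_smul {a b : R} {c : k} (h : a * b = c • (b * a)) (r : ℕ) :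
    a * b ^ r = c ^ r • (b ^ r * a) := by
  induction r with
  | zero => simp
  | succ r ih =>
    rw [pow_succ, ← mul_assoc, ih, smul_mul_assoc, mul_assoc, h, mul_smul_comm, smul_smul,
      ← mul_assoc, pow_succ]

theorem pow_mul_pow_eq_smul_of_mul_eq_smul {a b : R} {c : k} (h : a * b = c • (b * a))
    (p r : ℕ) : a ^ p * b ^ r = c ^ (p * r) • (b ^ r * a ^ p) := by
  induction p with
  | zero => simp
  | succ p ih =>
    rw [pow_succ, mul_assoc, mul_pow_eq_smul_of_mul_eq_smul h, mul_smul_comm, ← mul_assoc, ih,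
      smul_mul_assoc, smul_smul, mul_assoc, ← pow_add, Nat.succ_mul, add_comm]

theorem List.prod_map_mul_eq_smul {α : Type} (L : List α) (f : α → R) (g : α → k) {b : R}
    (h : ∀ l ∈ L, f l * b = g l • (b * f l)) :
    (L.map f).prod * b = (L.map g).prod • (b * (L.map f).prod) := by
  induction L with
  | nil => simp
  | cons l L ih =>
    simp only [List.map_cons, List.prod_cons, List.forall_mem_cons] at h ⊢
    rw [mul_assoc, ih h.2, mul_smul_comm, ← mul_assoc, h.1, smul_mul_assoc, smul_smul, mul_assoc,
      mul_comm (g l)]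

theorem List.mul_prod_map_eq_smul {α : Type} (L : List α) (f : α → R) (g : α → k) {b : R}
    (h : ∀ l ∈ L, b * f l = g l • (f l * b)) :
    b * (L.map f).prod = (L.map g).prod • ((L.map f).prod * b) := by
  induction L with
  | nil => simp
  | cons l L ih =>
    simp only [List.map_cons, List.prod_cons, List.forall_mem_cons] at h ⊢
    rw [← mul_assoc, h.1, smul_mul_assoc, mul_assoc, ih h.2, mul_smul_comm, smul_smul, mul_assoc]

end TwistedCommutation

namespace SkewPoly

variable {k : Type} [Field k] {n : ℕ} {R : Type} [Ring R] [Algebra k R] (S : SkewPoly k n R)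

theorem mono_ne_zero_s9 (a : Fin n → ℕ) : S.mono a ≠ 0 := S.linInd.ne_zero a

theorem mono_mul_mono (a b : Fin n → ℕ) :
    S.mono a * S.mono b = (S.C a b : k) • S.mono (a + b) := S.C_spec a b

theorem mono_mul_mono_comm (a b : Fin n → ℕ) :
    S.mono a * S.mono b = (S.chi a b : k) • (S.mono b * S.mono a) := by
  have hx : ∀ i, S.x i ^ a i * S.mono b =
      (∏ j, (S.q i j : k) ^ (a i * b j)) • (S.mono b * S.x i ^ a i) := fun i => by
      rw [Fin.prod_univ_def, mono]
      exact List.mul_prod_map_eq_smul _ _ _ fun j _ =>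
        pow_mul_pow_eq_smul_of_mul_eq_smul (S.x_comm i j) _ _
  rw [mono, List.prod_map_mul_eq_smul _ _ _ fun i _ => hx i, ← Fin.prod_univ_def, chi]
  push_cast
  rfl

theorem C_mul_C_add_comm (t a b : Fin n → ℕ) :
    S.C t b * S.C (t + b) a = S.chi b a * S.C t a * S.C (t + a) b := by
  have hba : S.mono t * S.mono b * S.mono a
      = (S.C t b * S.C (t + b) a : k) • S.mono (t + a + b) := by
    rw [mono_mul_mono, smul_mul_assoc, mono_mul_mono, smul_smul, add_right_comm]
  have hab : S.mono t * S.mono b * S.mono a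
      = (S.chi b a * S.C t a * S.C (t + a) b : k) • S.mono (t + a + b) := by
    rw [mul_assoc, mono_mul_mono_comm, mul_smul_comm, ← mul_assoc, mono_mul_mono, smul_mul_assoc,
      mono_mul_mono, smul_smul, smul_smul, mul_assoc]
  exact Units.ext (smul_left_injective k (S.mono_ne_zero_s9 _) (hba.symm.trans hab))

theorem chi_zero_right (a : Fin n → ℕ) : S.chi a 0 = 1 := by
  simp [chi]

theorem chi_add_right (a b c : Fin n → ℕ) : S.chi a (b + c) = S.chi a b * S.chi a c := by
  simp only [chi, Pi.add_apply, mul_add, pow_add, ← prod_mul_distrib]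

section Ordered

variable {ι : Type} [LinearOrder ι] (m : ι → Fin n → ℕ)

/-- For `σ = {i_1 < ⋯ < i_j}`,
`x^{m_{i_1}} ⋯ x^{m_{i_j}} = orderedC S m σ • x^{m_{i_1} + ⋯ + m_{i_j}}`. -/
def orderedC (σ : Finset ι) : kˣ :=
  ∏ i ∈ σ, S.C (∑ j ∈ σ.filter (· < i), m j) (m i)

theorem orderedC_empty : S.orderedC m ∅ = 1 := prod_empty

theorem orderedC_insert_of_forall_lt {a : ι} {t : Finset ι} (ha : ∀ x ∈ t, x < a) :
    S.orderedC m (insert a t) = S.orderedC m t * S.C (∑ j ∈ t, m j) (m a) := by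
  have hat : a ∉ t := fun h => lt_irrefl a (ha a h)
  have hfa : (insert a t).filter (· < a) = t := by
    rw [filter_insert, if_neg (lt_irrefl a), filter_true_of_mem ha]
  have hft : ∀ l ∈ t, (insert a t).filter (· < l) = t.filter (· < l) := fun l hl => by
    rw [filter_insert, if_neg (lt_asymm (ha l hl))]
  rw [orderedC, prod_insert hat, hfa, mul_comm, orderedC]
  exact congrArg (· * _) (prod_congr rfl fun l hl => by rw [hft l hl])

theorem orderedC_insert {i : ι} {τ : Finset ι} (hi : i ∉ τ) :
    S.orderedC m (insert i τ) =
      S.chi (m i) (∑ j ∈ τ.filter (i < ·), m j) * S.orderedC m τ * S.C (∑ j ∈ τ, m j) (m i) := by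
  induction τ using Finset.induction_on_max generalizing i with
  | empty =>
    rw [S.orderedC_insert_of_forall_lt m (by simp)]
    simp [orderedC_empty, chi_zero_right]
  | insert a t ha ih =>
    have hat : a ∉ t := fun h => lt_irrefl a (ha a h)
    obtain ⟨hia, hit⟩ : i ≠ a ∧ i ∉ t := by simpa using hi
    rcases hia.lt_or_gt with hia | hai
    · have hlt : ∀ x ∈ insert i t, x < a := by
        simpa [hia] using ha
      have hfi : (insert a t).filter (i < ·) = insert a (t.filter (i < ·)) := by
        rw [filter_insert, if_pos hia]
      rw [insert_comm, S.orderedC_insert_of_forall_lt m hlt, ih hit,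
        S.orderedC_insert_of_forall_lt m ha, hfi,
        sum_insert (s := t.filter (i < ·)) (by simp [hat]), sum_insert hit, sum_insert hat, add_comm (m a), add_comm (m i), S.chi_add_right, mul_assoc,
        S.C_mul_C_add_comm]
      ac_rfl
    · have hlt : ∀ x ∈ insert a t, x < i := by
        simpa [hai] using fun x hx => (ha x hx).trans hai
      have hfi : (insert a t).filter (i < ·) = ∅ :=
        filter_false_of_mem fun x hx => not_lt.mpr (hlt x hx).le
      rw [S.orderedC_insert_of_forall_lt m hlt, hfi, sum_empty, chi_zero_right, one_mul]

end Ordered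

end SkewPoly

theorem lcmE_eq_sum {n s : ℕ} {m : Fin s → Fin n → ℕ}
    (hdisj : ∀ i j : Fin s, i ≠ j → ∀ t : Fin n, m i t = 0 ∨ m j t = 0) (τ : Finset (Fin s)) :
    lcmE m τ = ∑ j ∈ τ, m j := by
  funext t
  rw [lcmE, Finset.sum_apply]
  by_cases h : ∃ i ∈ τ, m i t ≠ 0
  · obtain ⟨i, hiτ, hi⟩ := h
    have hzero : ∀ j ∈ τ, j ≠ i → m j t = 0 := fun j _ hji =>
      (hdisj i j hji.symm t).resolve_left hi
    rw [sum_eq_single i hzero (absurd hiτ)]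
    refine le_antisymm (Finset.sup_le fun j hj => ?_) (le_sup (f := fun j => m j t) hiτ)
    rcases eq_or_ne j i with rfl | hji
    · rfl
    · simp [hzero j hj hji]
  · simp only [not_exists, not_and, not_not] at h
    rw [sum_eq_zero h, ← bot_eq_zero, Finset.sup_eq_bot_iff]
    exact h

/-- if `m_1,…,m_s` have pairwise disjoint supports, then the skew Koszul complex
and the skew Taylor complex are isomorphic via the chain isomorphism
`ψ(e_σ) = e_σ · Π_{r=2}^{j} C(m_{i_1}*⋯*m_{i_{r-1}}, m_{i_r})⁻¹`. -/
theorem koszul_iso_taylor {k : Type} [Field k] {n : ℕ} {R : Type} [Ring R] [Algebra k R]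
    {s : ℕ} (S : SkewPoly k n R) (m : Fin s → Fin n → ℕ)
    (hdisj : ∀ i j : Fin s, i ≠ j → ∀ t : Fin n, m i t = 0 ∨ m j t = 0) :
    Function.Bijective
      (fun (f : Finset (Fin s) → R) => fun σ : Finset (Fin s) =>
        ((∏ i ∈ σ, ((S.C (∑ j ∈ σ.filter (· < i), m j) (m i))⁻¹ : kˣ) : kˣ) : k) • f σ) ∧
    ∀ f : Finset (Fin s) → R,
      (fun σ : Finset (Fin s) =>
          ((∏ i ∈ σ, ((S.C (∑ j ∈ σ.filter (· < i), m j) (m i))⁻¹ : kˣ) : kˣ) : k) •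
            taylorD S m 0 f σ) =
        koszulD S m (fun σ : Finset (Fin s) =>
          ((∏ i ∈ σ, ((S.C (∑ j ∈ σ.filter (· < i), m j) (m i))⁻¹ : kˣ) : kˣ) : k) • f σ) := by
  refine ⟨MulAction.bijective fun σ => ∏ i ∈ σ, (S.C (∑ j ∈ σ.filter (· < i), m j) (m i))⁻¹,
    fun f => funext fun τ => ?_⟩
  have hψ : ∀ σ : Finset (Fin s),
      ∏ i ∈ σ, (S.C (∑ j ∈ σ.filter (· < i), m j) (m i))⁻¹ = (S.orderedC m σ)⁻¹ :=
    fun σ => prod_inv_distrib _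
  simp only [hψ, taylorD, koszulD, smul_sum]
  refine sum_congr rfl fun i hic => ?_
  have hi : i ∉ τ := mem_compl.mp hic
  have hlcm : lcmE m (insert i τ) - lcmE m τ = m i := by
    rw [lcmE_eq_sum hdisj, lcmE_eq_sum hdisj, sum_insert hi, add_tsub_cancel_right]
  rw [add_zero, hlcm, lcmE_eq_sum hdisj, S.orderedC_insert m hi]
  simp only [mul_assoc, ← Algebra.smul_def, mul_smul_comm, smul_mul_assoc, smul_smul]
  congr 1
  rw [← Units.val_mul, ← Units.val_mul, mul_inv_rev, mul_inv_rev, inv_mul_cancel_right, mul_comm]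
end

section
/- Let I be a squarefree stable monomial ideal in a skew polynomial ring, with its minimal generators ordered by the reverse degree lexicographic order. Then I has linear quotients with set(u) = {i : i < max(u), i ∉ supp(u)} for every minimal generator u. -/
/-!
If `i < j` and `u_i ∣ w u_j`, either `u_i` already has a variable `x_s` with `s < max(u_j)`
missing from `u_j`, and then `x_s ∣ w`, or `u_i` has smaller degree and is supported on
`supp(u_j)` together with indices above `max(u_j)`. In the latter case stability replaces the
largest variable of `u_i` by a variable of `u_j` missing from `u_i`; the new generator still
divides `w u_j` and has smaller degree above `max(u_j)`, so the process ends at a generator with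
the first property, because a generator living on `supp(u_j)` would divide `u_j`. Conversely,
for `s ∈ set(u_j)` stability gives a generator dividing `x_s u_j / x_{max(u_j)}`, which is
`rdlex`-larger than `u_j` and hence comes before it.
-/

open Finset

/-- Reverse degree lexicographic comparison on exponent vectors: `a <_rdlex b` iff `a` has
larger total degree, or the degrees agree and at the last position where they differ, `a`
has the larger exponent. -/
def rdlexLT {n : ℕ} (a b : Fin n → ℕ) : Prop :=
  (∑ i, b i) < (∑ i, a i) ∨
    ((∑ i, a i) = (∑ i, b i) ∧ ∃ t, b t < a t ∧ ∀ s, t < s → a s = b s)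

section ExponentVectors

variable {n : ℕ}

/-- `M = max(a)` in the notation of the statement. -/
def IsMaxIndex (a : Fin n → ℕ) (M : Fin n) : Prop :=
  a M ≠ 0 ∧ ∀ t, M < t → a t = 0

lemma exists_isMaxIndex {a : Fin n → ℕ} (h : ∃ t, a t ≠ 0) : ∃ M, IsMaxIndex a M := by
  obtain ⟨t, ht⟩ := h
  obtain ⟨M, hM, hmax⟩ := (univ.filter (a · ≠ 0)).exists_max_image id ⟨t, by simpa using ht⟩
  refine ⟨M, (mem_filter.mp hM).2, fun t hMt => ?_⟩
  by_contra ht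
  exact (hmax t (by simpa using ht)).not_gt hMt

lemma IsMaxIndex.le_of_ne_zero {a : Fin n → ℕ} {M t : Fin n} (hM : IsMaxIndex a M)
    (ht : a t ≠ 0) : t ≤ M :=
  le_of_not_gt fun h => ht (hM.2 t h)

lemma single_one_le_iff {a : Fin n → ℕ} {s : Fin n} : Pi.single s 1 ≤ a ↔ a s ≠ 0 := by
  refine ⟨fun h => Nat.one_le_iff_ne_zero.mp (by simpa using h s), fun h x => ?_⟩
  rcases eq_or_ne x s with rfl | hx
  · simpa [Nat.one_le_iff_ne_zero] using h
  · simp [hx]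

lemma sum_single_add_tsub_single {a : Fin n → ℕ} {M : Fin n} (hM : a M ≠ 0) (s : Fin n)
    (S : Finset (Fin n)) :
    ∑ x ∈ S, (Pi.single s 1 + (a - Pi.single M 1) : Fin n → ℕ) x + (if M ∈ S then 1 else 0) =
      ∑ x ∈ S, a x + (if s ∈ S then 1 else 0) := by
  have h : Pi.single s 1 + (a - Pi.single M 1) + Pi.single M 1 = a + Pi.single s 1 := by
    rw [add_assoc, tsub_add_cancel_of_le (single_one_le_iff.mpr hM), add_comm]
  simpa only [Pi.add_apply, sum_add_distrib, sum_pi_single'] using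
    congrArg (fun b : Fin n → ℕ => ∑ x ∈ S, b x) h

lemma rdlexLT.sum_le {a b : Fin n → ℕ} (h : rdlexLT a b) : ∑ i, b i ≤ ∑ i, a i := by
  rcases h with h | ⟨h, -⟩ <;> omega

lemma rdlexLT.exists_ne_zero {a b : Fin n → ℕ} (h : rdlexLT a b) : ∃ t, a t ≠ 0 := by
  rcases h with h | ⟨-, t, ht, -⟩
  · obtain ⟨t, -, ht⟩ := exists_ne_zero_of_sum_ne_zero h.ne_bot
    exact ⟨t, ht⟩
  · exact ⟨t, by omega⟩

lemma rdlexLT.asymm {a b : Fin n → ℕ} (hab : rdlexLT a b) : ¬ rdlexLT b a := by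
  rcases hab with hab | ⟨hsum, t, hab, hagree⟩
  · exact fun hba => hab.not_ge hba.sum_le
  rintro (hba | ⟨-, t', hba, hagree'⟩)
  · omega
  rcases lt_trichotomy t t' with htt | rfl | htt
  · exact (hagree t' htt ▸ hba).false
  · omega
  · exact (hagree' t htt ▸ hab).false

lemma rdlexLT.irrefl (a : Fin n → ℕ) : ¬ rdlexLT a a := fun h => h.asymm h

lemma rdlexLT.of_le_right {a b c : Fin n → ℕ} (hab : rdlexLT a b) (hcb : c ≤ b) :
    rdlexLT a c := by
  rcases eq_or_ne c b with rfl | hne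
  · exact hab
  have hlt : ∑ i, c i < ∑ i, b i :=
    sum_lt_sum (fun i _ => hcb i) (by
      by_contra! h
      exact hne (funext fun i => le_antisymm (hcb i) (h i (mem_univ i))))
  exact Or.inl (hlt.trans_le hab.sum_le)

lemma rdlexLT_single_add_tsub_single {a : Fin n → ℕ} {M s : Fin n} (hM : IsMaxIndex a M)
    (hs : s < M) : rdlexLT a (Pi.single s 1 + (a - Pi.single M 1)) := by
  have hsum := sum_single_add_tsub_single hM.1 s univ
  simp only [mem_univ, if_true, add_left_inj] at hsum
  refine Or.inr ⟨hsum.symm, M, ?_, fun t hMt => ?_⟩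
  · simp [hs.ne, Nat.pos_of_ne_zero hM.1]
  · simp [(hs.trans hMt).ne', hMt.ne', hM.2 t hMt]

lemma exists_lt_of_sum_eq {a b : Fin n → ℕ} (hsum : ∑ i, a i = ∑ i, b i) {t : Fin n}
    (ht : b t < a t) (hagree : ∀ s, t < s → a s = b s) : ∃ s < t, a s < b s := by
  by_contra! h
  have hle : ∀ s, b s ≤ a s := fun s => by
    rcases lt_trichotomy s t with hst | rfl | hts
    · exact h s hst
    · exact ht.le
    · exact (hagree s hts).ge
  exact (sum_lt_sum (fun s _ => hle s) ⟨t, mem_univ t, ht⟩).ne hsum.symm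

end ExponentVectors

section SquarefreeStable

variable {n m : ℕ} {u : Fin m → Fin n → ℕ}

def IsStable (u : Fin m → Fin n → ℕ) : Prop :=
  ∀ j M, IsMaxIndex (u j) M → ∀ i < M, u j i = 0 →
    ∃ j', u j' ≤ Pi.single i 1 + (u j - Pi.single M 1)

lemma lt_of_rdlexLT (horder : ∀ i j : Fin m, i < j → rdlexLT (u j) (u i)) {i j : Fin m}
    (h : rdlexLT (u j) (u i)) : i < j := by
  rcases lt_trichotomy i j with hij | rfl | hji
  · exact hij
  · exact absurd h (rdlexLT.irrefl _)
  · exact absurd (horder j i hji) h.asymm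

lemma IsStable.exists_lt_le_add (hstab : IsStable u)
    (horder : ∀ i j : Fin m, i < j → rdlexLT (u j) (u i)) {j : Fin m} {s : Fin n}
    (hs : ∃ t, s < t ∧ u j t ≠ 0) (hjs : u j s = 0) {w : Fin n → ℕ} (hws : 1 ≤ w s) :
    ∃ i < j, u i ≤ w + u j := by
  obtain ⟨t, hst, ht⟩ := hs
  obtain ⟨M, hM⟩ := exists_isMaxIndex ⟨t, ht⟩
  have hsM : s < M := hst.trans_le (hM.le_of_ne_zero ht)
  obtain ⟨i, hi⟩ := hstab j M hM s hsM hjs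
  exact ⟨i, lt_of_rdlexLT horder ((rdlexLT_single_add_tsub_single hM hsM).of_le_right hi),
    hi.trans (add_le_add (single_one_le_iff.mpr (by omega)) tsub_le_self)⟩

lemma exists_lt_of_forall_lt_eq_zero (hsqf : ∀ (j : Fin m) (i : Fin n), u j i ≤ 1)
    (hmin : ∀ i j : Fin m, i ≠ j → ¬ u i ≤ u j) {j p : Fin m} {M : Fin n} (hM : u j M ≠ 0)
    (hdeg : ∑ x, u p x < ∑ x, u j x) (hp : ∀ t, M < t → u p t = 0) :
    ∃ s < M, u j s < u p s := by
  by_contra! h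
  refine hmin p j (by rintro rfl; exact hdeg.false) fun x => show u p x ≤ u j x from ?_
  rcases lt_trichotomy x M with hx | rfl | hx
  · exact h x hx
  · have := hsqf p x; omega
  · simp [hp x hx]

lemma IsStable.exists_sum_Ioi_lt (hstab : IsStable u)
    (hsqf : ∀ (j : Fin m) (i : Fin n), u j i ≤ 1) {j p : Fin m} {M : Fin n}
    (hM : IsMaxIndex (u j) M) {w : Fin n → ℕ} (hdeg : ∑ x, u p x < ∑ x, u j x)
    (hdvd : u p ≤ w + u j) {t : Fin n} (hMt : M < t) (ht : u p t ≠ 0) :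
    ∃ q, ∑ x, u q x < ∑ x, u j x ∧ u q ≤ w + u j ∧
      ∑ x ∈ Ioi M, u q x < ∑ x ∈ Ioi M, u p x := by
  obtain ⟨s, hs⟩ := exists_isMaxIndex ⟨t, ht⟩
  have hMs : M < s := hMt.trans_le (hs.le_of_ne_zero ht)
  obtain ⟨i, hji, hpi⟩ : ∃ i, u j i ≠ 0 ∧ u p i = 0 := by
    by_contra! h
    refine hdeg.not_ge (sum_le_sum fun x _ => ?_)
    by_cases hx : u j x = 0
    · simp [hx]
    · have := hsqf j x
      have := h x hx
      omega
  have hiM : i ≤ M := hM.le_of_ne_zero hji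
  obtain ⟨q, hq⟩ := hstab p s hs i (hiM.trans_lt hMs) hpi
  have hsum := sum_single_add_tsub_single hs.1 i univ
  have hsumIoi := sum_single_add_tsub_single hs.1 i (Ioi M)
  simp only [mem_univ, if_true, add_left_inj] at hsum
  simp only [mem_Ioi, hMs, if_true, hiM.not_gt, if_false, add_zero] at hsumIoi
  have hv : Pi.single i 1 + (u p - Pi.single s 1) ≤ w + u j := fun x => by
    have : u p x ≤ w x + u j x := hdvd x
    rcases eq_or_ne x i with rfl | hxi
    · simp only [Pi.add_apply, Pi.sub_apply, Pi.single_eq_same, hpi, zero_tsub]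
      omega
    · simp only [Pi.add_apply, Pi.sub_apply, Pi.single_eq_of_ne hxi]
      omega
  exact ⟨q, (sum_le_sum fun x _ => hq x).trans_lt (hsum ▸ hdeg), hq.trans hv,
    (sum_le_sum fun x _ => hq x).trans_lt (by omega)⟩

lemma IsStable.exists_le_add_lt_of_sum_lt (hstab : IsStable u)
    (hsqf : ∀ (j : Fin m) (i : Fin n), u j i ≤ 1) (hmin : ∀ i j : Fin m, i ≠ j → ¬ u i ≤ u j)
    {j p : Fin m} {M : Fin n} (hM : IsMaxIndex (u j) M) {w : Fin n → ℕ}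
    (hdeg : ∑ x, u p x < ∑ x, u j x) (hdvd : u p ≤ w + u j) :
    ∃ q, u q ≤ w + u j ∧ ∃ s < M, u j s < u q s := by
  induction hμ : ∑ x ∈ Ioi M, u p x using Nat.strong_induction_on generalizing p with
  | _ μ ih =>
  by_cases habove : ∃ t, M < t ∧ u p t ≠ 0
  · obtain ⟨t, hMt, ht⟩ := habove
    obtain ⟨q, hqdeg, hqdvd, hqμ⟩ := hstab.exists_sum_Ioi_lt hsqf hM hdeg hdvd hMt ht
    exact ih _ (hμ ▸ hqμ) hqdeg hqdvd rfl
  · push Not at habove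
    exact ⟨p, hdvd, exists_lt_of_forall_lt_eq_zero hsqf hmin hM.1 hdeg habove⟩

lemma IsStable.exists_mem_set_of_le_add (hstab : IsStable u)
    (hsqf : ∀ (j : Fin m) (i : Fin n), u j i ≤ 1) (hmin : ∀ i j : Fin m, i ≠ j → ¬ u i ≤ u j)
    {i j : Fin m} (hji : rdlexLT (u j) (u i)) {w : Fin n → ℕ} (hdvd : u i ≤ w + u j) :
    ∃ s : Fin n, ((∃ t, s < t ∧ u j t ≠ 0) ∧ u j s = 0) ∧ 1 ≤ w s := by
  obtain ⟨M, hM⟩ := exists_isMaxIndex hji.exists_ne_zero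
  obtain ⟨q, hq, s, hsM, hs⟩ : ∃ q, u q ≤ w + u j ∧ ∃ s < M, u j s < u q s := by
    rcases hji with hdeg | ⟨hsum, t, ht, hagree⟩
    · exact hstab.exists_le_add_lt_of_sum_lt hsqf hmin hM hdeg hdvd
    · obtain ⟨s, hst, hs⟩ := exists_lt_of_sum_eq hsum ht hagree
      exact ⟨i, hdvd, s, hst.trans_le (hM.le_of_ne_zero (by omega)), hs⟩
  have : u q s ≤ w s + u j s := hq s
  have := hsqf q s
  exact ⟨s, ⟨⟨M, hsM, hM.1⟩, by omega⟩, by omega⟩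

end SquarefreeStable

/-- a squarefree stable ideal, with minimal generators `x^(u 0), …, x^(u (m-1))`
listed in (descending) reverse degree lexicographic order, has linear quotients with
`set(u_j) = {i : i < max(u_j), i ∉ supp(u_j)}`. -/
theorem squarefree_stable_linear_quotients {n m : ℕ} (u : Fin m → (Fin n → ℕ))
    (hsqf : ∀ (j : Fin m) (i : Fin n), u j i ≤ 1)
    (hmin : ∀ i j : Fin m, i ≠ j → ¬ ∃ c, u j = u i + c)
    (hstab : ∀ (j : Fin m) (M : Fin n), (u j M ≠ 0 ∧ ∀ t, M < t → u j t = 0) →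
      ∀ i : Fin n, i < M → u j i = 0 →
        ∃ (j' : Fin m) (c : Fin n → ℕ), Pi.single i 1 + (u j - Pi.single M 1) = u j' + c)
    (horder : ∀ i j : Fin m, i < j → rdlexLT (u j) (u i)) :
    ∀ (j : Fin m) (w : Fin n → ℕ),
      (∃ i : Fin m, i < j ∧ ∃ c, w + u j = u i + c) ↔
      ∃ s : Fin n, ((∃ t, s < t ∧ u j t ≠ 0) ∧ u j s = 0) ∧ 1 ≤ w s := by
  have hmin' : ∀ i j : Fin m, i ≠ j → ¬ u i ≤ u j := fun i j hij h =>
    hmin i j hij (le_iff_exists_add.mp h)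
  have hstab' : IsStable u := fun j M hM i hiM hji => by
    obtain ⟨j', c, h⟩ := hstab j M hM i hiM hji
    exact ⟨j', h ▸ le_self_add⟩
  intro j w
  simp only [← le_iff_exists_add]
  constructor
  · rintro ⟨i, hij, hdvd⟩
    exact hstab'.exists_mem_set_of_le_add hsqf hmin' (horder i j hij) hdvd
  · rintro ⟨s, ⟨hs, hjs⟩, hws⟩
    exact hstab'.exists_lt_le_add horder hs hjs hws
end

section
/- Every matroidal ideal in a skew polynomial ring has linear quotients with respect to the reverse lexicographic order on its minimal generators, and its decomposition function is regular. -/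
open Finset

/-- Reverse lexicographic comparison on exponent vectors: `a <_rlex b` iff at the last
position where they differ, `a` has the larger exponent. -/
def rlexLT {n : ℕ} (a b : Fin n → ℕ) : Prop :=
  ∃ t, b t < a t ∧ ∀ s, t < s → a s = b s

/-!
Identify each squarefree generator `u_j` with its support `B_j`. The exchange property makes the
`B_j` the bases of a matroid, and listing the generators in decreasing reverse lexicographic
order means listing the bases in increasing colex order. Comparing two bases that differ in one
element shows that `s ∈ set(u_j)` exactly when `B_j - t + s` is a basis for some `t ∈ B_j` with
`s < t`. Linear quotients: if `u_i` with `i < j` divides `x^w u_j`, exchange the largest element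
of `B_j \ B_i` against an element `s` of `B_i \ B_j`, which lies in `supp w`. Regularity:
`g(x_s u_j)` has support `B_j - t + s`, and one or two further basis exchanges turn each witness
for `r ∈ set(g(x_s u_j))` into a witness for `r ∈ set(u_j)`.
-/

open Colex

namespace Finset

variable {α : Type*} [DecidableEq α]

theorem exists_eq_insert_erase_of_subset_insert {A C : Finset α} {s : α}
    (hsub : C ⊆ insert s A) (hcard : #C = #A) (hne : C ≠ A) :
    s ∉ A ∧ ∃ t ∈ A, C = insert s (A.erase t) := by
  have hsA : s ∉ A := fun hs =>
    hne (eq_of_subset_of_card_le (by rwa [insert_eq_of_mem hs] at hsub) hcard.ge)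
  have hssub : C ⊂ insert s A :=
    ssubset_of_subset_of_ne hsub fun h => by simp [h, card_insert_of_notMem hsA] at hcard
  obtain ⟨t, ht, htC⟩ := exists_of_ssubset hssub
  have hts : t ≠ s := fun h => hne <| eq_of_subset_of_card_le
    (fun x hx => by grind) hcard.ge
  have hCt : C = (insert s A).erase t := eq_of_subset_of_card_le
    (subset_erase.2 ⟨hsub, htC⟩) (by simp [card_erase_of_mem ht, card_insert_of_notMem hsA, hcard])
  exact ⟨hsA, t, (mem_insert.1 ht).resolve_left hts, by rw [hCt, erase_insert_of_ne hts.symm]⟩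

end Finset

theorem Finset.Colex.toColex_insert_erase_lt_iff {α : Type*} [LinearOrder α] {A : Finset α}
    {s t : α} (hs : s ∉ A) (ht : t ∈ A) : toColex (insert s (A.erase t)) < toColex A ↔ s < t := by
  nth_rw 2 [← insert_erase ht]
  exact insert_lt_insert (fun h => hs (mem_of_mem_erase h)) (notMem_erase t A)

section ExponentVector

variable {α : Type*} [Fintype α]

def supportFinset (a : α → ℕ) : Finset α := {t | a t ≠ 0}

@[simp]
theorem mem_supportFinset {a : α → ℕ} {t : α} : t ∈ supportFinset a ↔ a t ≠ 0 := by
  simp [supportFinset]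

theorem sum_eq_card_supportFinset {a : α → ℕ} (ha : ∀ t, a t ≤ 1) :
    ∑ t, a t = #(supportFinset a) := by
  rw [supportFinset, card_filter]
  exact sum_congr rfl fun t _ => by have := ha t; split_ifs <;> omega

theorem exists_eq_add_iff_supportFinset_subset {a b : α → ℕ} (hb : ∀ t, b t ≤ 1) :
    (∃ c, a = b + c) ↔ supportFinset b ⊆ supportFinset a := by
  rw [← le_iff_exists_add]
  refine ⟨fun h t ht => ?_, fun h t => ?_⟩
  · have hle : b t ≤ a t := h t
    simp only [mem_supportFinset] at ht ⊢
    omega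
  · have hsupp : b t ≠ 0 → a t ≠ 0 := by simpa using @h t
    have := hb t
    show b t ≤ a t
    omega

variable [DecidableEq α]

theorem supportFinset_add (a b : α → ℕ) :
    supportFinset (a + b) = supportFinset a ∪ supportFinset b := by
  ext t
  simp [Nat.add_eq_zero_iff, or_iff_not_imp_left]

theorem supportFinset_single_add (s : α) (a : α → ℕ) :
    supportFinset (Pi.single s 1 + a) = insert s (supportFinset a) := by
  ext t
  rcases eq_or_ne t s with rfl | hts <;> simp [*]

theorem supportFinset_sub_single {a : α → ℕ} (ha : ∀ t, a t ≤ 1) (s : α) :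
    supportFinset (a - Pi.single s 1) = (supportFinset a).erase s := by
  ext t
  rcases eq_or_ne t s with rfl | hts
  · simpa [Nat.sub_eq_zero_iff_le] using ha t
  · simp [hts]

end ExponentVector

theorem toColex_supportFinset_lt_of_rlexLT {n : ℕ} {a b : Fin n → ℕ} (ha : ∀ t, a t ≤ 1)
    (h : rlexLT a b) : toColex (supportFinset b) < toColex (supportFinset a) := by
  obtain ⟨t, hbt, heq⟩ := h
  have := ha t
  refine toColex_lt_toColex_iff_exists_forall_lt.2
    ⟨t, by simp; omega, by simp; omega, fun s hsb hsa => lt_of_not_ge fun hts => ?_⟩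
  rcases hts.lt_or_eq with hts | rfl
  · exact hsa (by simpa [heq s hts] using hsb)
  · exact hsa (by simp; omega)

section BasisFamily

variable {α ι : Type*}

structure IsMatroidal [DecidableEq α] (B : ι → Finset α) : Prop where
  card_eq : ∀ i j, #(B i) = #(B j)
  exchange : ∀ a b x, x ∈ B a → x ∉ B b →
    ∃ y ∈ B b, y ∉ B a ∧ ∃ c, B c = insert y ((B a).erase x)

open Classical in
/-- The paper's `set(u_j)`: the variables `x_s` such that some earlier generator divides
`x_s u_j`. -/
noncomputable def colonSet [Fintype α] [DecidableEq α] [LT ι] (B : ι → Finset α) (j : ι) :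
    Finset α :=
  {s | ∃ i < j, B i ⊆ insert s (B j)}

theorem mem_colonSet [Fintype α] [DecidableEq α] [LT ι] {B : ι → Finset α} {j : ι} {s : α} :
    s ∈ colonSet B j ↔ ∃ i < j, B i ⊆ insert s (B j) := by
  simp [colonSet]

variable [LinearOrder α] [LinearOrder ι] {B : ι → Finset α}

theorem exists_eq_insert_erase_of_lt (hB : IsMatroidal B) (hmono : StrictMono (toColex ∘ B))
    {i j : ι} {s : α} (hij : i < j) (hsub : B i ⊆ insert s (B j)) :
    s ∉ B j ∧ ∃ t ∈ B j, s < t ∧ B i = insert s ((B j).erase t) := by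
  obtain ⟨hs, t, ht, hBi⟩ := exists_eq_insert_erase_of_subset_insert hsub (hB.card_eq i j)
    (hmono.injective.ne hij.ne)
  have hlt : toColex (B i) < toColex (B j) := hmono hij
  rw [hBi, toColex_insert_erase_lt_iff hs ht] at hlt
  exact ⟨hs, t, ht, hlt, hBi⟩

variable [Fintype α]

theorem mem_colonSet_of_eq_insert_erase (hmono : StrictMono (toColex ∘ B)) {j c : ι} {s t : α}
    (hs : s ∉ B j) (ht : t ∈ B j) (hst : s < t) (hc : B c = insert s ((B j).erase t)) :
    s ∈ colonSet B j := by
  have hcj : toColex (B c) < toColex (B j) := by rwa [hc, toColex_insert_erase_lt_iff hs ht]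
  exact mem_colonSet.2 ⟨c, hmono.lt_iff_lt.1 hcj, hc ▸ insert_subset_insert s (erase_subset t _)⟩

theorem exists_lt_subset_union_iff (hB : IsMatroidal B) (hmono : StrictMono (toColex ∘ B))
    (W : Finset α) (j : ι) : (∃ i < j, B i ⊆ W ∪ B j) ↔ ∃ s ∈ colonSet B j, s ∈ W := by
  constructor
  · rintro ⟨i, hij, hsub⟩
    obtain ⟨t, htj, hti, hmax⟩ := toColex_lt_toColex_iff_exists_forall_lt.1 (hmono hij)
    obtain ⟨s, hsi, hsj, c, hc⟩ := hB.exchange j i t htj hti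
    have hsW : s ∈ W := by simpa [hsj] using hsub hsi
    exact ⟨s, mem_colonSet_of_eq_insert_erase hmono hsj htj (hmax s hsi hsj) hc, hsW⟩
  · rintro ⟨s, hs, hsW⟩
    obtain ⟨i, hij, hsub⟩ := mem_colonSet.1 hs
    exact ⟨i, hij, hsub.trans (insert_subset (mem_union_left _ hsW) subset_union_right)⟩

theorem colonSet_subset_colonSet (hB : IsMatroidal B) (hmono : StrictMono (toColex ∘ B))
    {j j' : ι} {s : α} (hs : s ∈ colonSet B j) (hj' : B j' ⊆ insert s (B j))
    (hmin : ∀ i < j', ¬ B i ⊆ insert s (B j)) : colonSet B j' ⊆ colonSet B j := by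
  intro r hr
  obtain ⟨i₀, hi₀, hi₀s⟩ := mem_colonSet.1 hs
  have hj'j : j' < j := (not_lt.1 fun h => hmin i₀ h hi₀s).trans_lt hi₀
  obtain ⟨hsj, t, ht, -, hBj'⟩ := exists_eq_insert_erase_of_lt hB hmono hj'j hj'
  obtain ⟨i', hi', hi'r⟩ := mem_colonSet.1 hr
  obtain ⟨hrj', p, hp, hrp, hBi'⟩ := exists_eq_insert_erase_of_lt hB hmono hi' hi'r
  have hrt : r ≠ t := by
    rintro rfl
    by_cases hps : p = s
    · have hBi'j : B i' = B j := by rw [hBi', hBj', hps]; grind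
      exact hmono.injective.ne (hi'.trans hj'j).ne (congrArg toColex hBi'j)
    · exact hmin i' hi' (by rw [hBi', hBj']; grind)
  have hrj : r ∉ B j := by grind
  by_cases hps : p = s
  · exact mem_colonSet.2 ⟨i', hi'.trans hj'j, by rw [hBi', hBj', hps]; grind⟩
  have hpj : p ∈ B j := by grind
  have hpt : p ≠ t := by grind
  obtain ⟨q, hqj, hqi', c, hc⟩ := hB.exchange i' j s (by grind) hsj
  have hq : q = t ∨ q = p := by grind
  rcases hq with rfl | hqp
  · exact mem_colonSet_of_eq_insert_erase hmono hrj hpj hrp (by rw [hc, hBi', hBj']; grind)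
  rcases lt_or_gt_of_ne hrt with hrt | htr
  · exact mem_colonSet_of_eq_insert_erase hmono hrj ht hrt (by rw [hc, hBi', hBj']; grind)
  obtain ⟨y, hyi', hyj, c₂, hc₂⟩ := hB.exchange j i' p hpj (hqp ▸ hqi')
  have hy : y = s ∨ y = r := by grind
  rcases hy with rfl | rfl
  · exfalso
    have hc₂j' : j' < c₂ := by
      refine lt_of_le_of_ne (not_lt.1 fun h => hmin c₂ h ?_) ?_
      · rw [hc₂]; grind
      · rintro rfl; grind
    have : toColex (B c₂) < toColex (B j') := by
      rw [show B c₂ = insert t ((B j').erase p) by rw [hc₂, hBj']; grind,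
        toColex_insert_erase_lt_iff (by grind) (by grind)]
      exact htr.trans hrp
    exact (hmono hc₂j').asymm this
  · exact mem_colonSet_of_eq_insert_erase hmono hrj hpj hrp hc₂

end BasisFamily

theorem isMatroidal_supportFinset {α ι : Type*} [Fintype α] [DecidableEq α] {u : ι → α → ℕ}
    (hsqf : ∀ j t, u j t ≤ 1)
    (hdeg : ∀ i j, ∑ t, u i t = ∑ t, u j t)
    (hexch : ∀ a b x, u b x < u a x →
      ∃ y, u a y < u b y ∧ ∃ c, Pi.single y 1 + (u a - Pi.single x 1) = u c) :
    IsMatroidal fun j => supportFinset (u j) where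
  card_eq i j := by
    rw [← sum_eq_card_supportFinset (hsqf i), ← sum_eq_card_supportFinset (hsqf j), hdeg]
  exchange a b x hxa hxb := by
    simp only [mem_supportFinset, ne_eq, not_not] at hxa hxb
    obtain ⟨y, hy, c, hc⟩ := hexch a b x (by omega)
    have := hsqf b y
    refine ⟨y, by simp; omega, by simp; omega, c, ?_⟩
    rw [← hc, supportFinset_single_add, supportFinset_sub_single (hsqf a)]

theorem matroidal_linear_quotients_regular_general {n m : ℕ} (u : Fin m → (Fin n → ℕ))
    (hsqf : ∀ (j : Fin m) (i : Fin n), u j i ≤ 1)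
    (hdeg : ∀ i j : Fin m, (∑ t, u i t) = ∑ t, u j t)
    (hexch : ∀ (a b : Fin m) (i : Fin n), u b i < u a i →
      ∃ j : Fin n, u a j < u b j ∧ ∃ c : Fin m, Pi.single j 1 + (u a - Pi.single i 1) = u c)
    (horder : ∀ i j : Fin m, i < j → rlexLT (u j) (u i)) :
    ∃ setu : Fin m → Finset (Fin n),
      (∀ (j : Fin m) (w : Fin n → ℕ),
        (∃ i : Fin m, i < j ∧ ∃ c, w + u j = u i + c) ↔ ∃ s ∈ setu j, 1 ≤ w s) ∧
      (∀ (j : Fin m), ∀ s ∈ setu j, ∀ j' : Fin m,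
        IsDecomp u (Pi.single s 1 + u j) j' → setu j' ⊆ setu j) := by
  set B : Fin m → Finset (Fin n) := fun j => supportFinset (u j)
  have hB : IsMatroidal B := isMatroidal_supportFinset hsqf hdeg hexch
  have hmono : StrictMono (toColex ∘ B) := fun i j hij =>
    toColex_supportFinset_lt_of_rlexLT (hsqf j) (horder i j hij)
  have hdvd : ∀ i a, (∃ c, a = u i + c) ↔ B i ⊆ supportFinset a :=
    fun i _ => exists_eq_add_iff_supportFinset_subset (hsqf i)
  refine ⟨colonSet B, fun j w => ?_, fun j s hs j' ⟨hj', hmin⟩ => ?_⟩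
  · simp only [hdvd, supportFinset_add, Nat.one_le_iff_ne_zero, ← mem_supportFinset]
    exact exists_lt_subset_union_iff hB hmono _ j
  · simp only [hdvd, supportFinset_single_add] at hj' hmin
    exact colonSet_subset_colonSet hB hmono hs hj' hmin

/-- a matroidal ideal, with minimal generators `x^(u 0), …, x^(u (m-1))`
listed in (descending) reverse lexicographic order, has linear quotients, and its
decomposition function is regular. -/
theorem matroidal_linear_quotients_regular {n m : ℕ} (u : Fin m → (Fin n → ℕ))
    (hsqf : ∀ (j : Fin m) (i : Fin n), u j i ≤ 1)
    (hdeg : ∀ i j : Fin m, (∑ t, u i t) = ∑ t, u j t)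
    (hinj : Function.Injective u)
    (hexch : ∀ (a b : Fin m) (i : Fin n), u b i < u a i →
      ∃ j : Fin n, u a j < u b j ∧ ∃ c : Fin m, Pi.single j 1 + (u a - Pi.single i 1) = u c)
    (horder : ∀ i j : Fin m, i < j → rlexLT (u j) (u i)) :
    ∃ setu : Fin m → Finset (Fin n),
      (∀ (j : Fin m) (w : Fin n → ℕ),
        (∃ i : Fin m, i < j ∧ ∃ c, w + u j = u i + c) ↔ ∃ s ∈ setu j, 1 ≤ w s) ∧
      (∀ (j : Fin m), ∀ s ∈ setu j, ∀ j' : Fin m,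
        IsDecomp u (Pi.single s 1 + u j) j' → setu j' ⊆ setu j) :=
  matroidal_linear_quotients_regular_general u hsqf hdeg hexch horder
end
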